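/- arXiv:1705.00698 — 2 statements merged into one kernel-verified Lean document; each statement's English description precedes it below -/
import Mathlib

section
/- Suppose H ⊆ ℝ² is an interior hole, i.e. the closure of H is contained in the open square (0,1) × (0,1). Then the survivor set J(H) has positive Hausdorff dimension: dim_H J(H) > 0. -/
open MeasureTheory

noncomputable section

/-- Real value of a bit. -/
def bval (b : Bool) : ℝ := if b then 1 else 0

/-- The unit square `X = [0,1) × [0,1)`. -/
def bakerX : Set (ℝ × ℝ) := Set.Ico (0:ℝ) 1 ×ˢ Set.Ico (0:ℝ) 1

/-- The baker's map. -/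
def baker (p : ℝ × ℝ) : ℝ × ℝ :=
  if p.1 < 1/2 then (2 * p.1, p.2 / 2) else (2 * p.1 - 1, (p.2 + 1) / 2)

/-- Inverse of the baker's map (on `X`). -/
def bakerInv (p : ℝ × ℝ) : ℝ × ℝ :=
  if p.2 < 1/2 then (p.1 / 2, 2 * p.2) else ((p.1 + 1) / 2, 2 * p.2 - 1)

/-- `B^n` for `n : ℤ`. -/
def bakerIter (n : ℤ) : (ℝ × ℝ) → (ℝ × ℝ) :=
  if 0 ≤ n then baker^[n.toNat] else bakerInv^[(-n).toNat]

/-- Survivor set of a hole `H`. -/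
def survivor (H : Set (ℝ × ℝ)) : Set (ℝ × ℝ) :=
  {p | p ∈ bakerX ∧ ∀ n : ℤ, bakerIter n p ∉ H}

/-- The coding map `π`. -/
def pibar (u : ℤ → Bool) : ℝ × ℝ :=
  (∑' n : ℕ, bval (u ((n : ℤ) + 1)) / 2 ^ (n + 1),
   ∑' n : ℕ, bval (u (-(n : ℤ))) / 2 ^ (n + 1))

/-- `σ^n` for `n : ℤ`. -/
def shiftIter (n : ℤ) (u : ℤ → Bool) : ℤ → Bool := fun m => u (m + n)

/-!
Take `N = 2k + 2` with `2⁻ᵏ` below both coordinates of every point of `H`, and code points by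
sequences `u : ℤ → Bool` whose `true` entries lie at multiples of `N`. Two such entries are at
least `N > 2k` apart, so every shift of `u` has `k` consecutive `false` entries just after or
just before the origin: every point of the orbit has a coordinate `≤ 2⁻ᵏ` and avoids `H`.
Placing free bits `c₀, c₁, …` at the positions `N, 2N, …` gives a family of such points, and
points whose bits first differ at index `j` have first coordinates at least `2^{-((j+1)N+1)}`
apart. Reading the bits off is therefore a `1/N`-Hölder map from the family onto `[0, 1]`, so
the survivor set has dimension at least `1/N`.
-/

open scoped NNReal ENNReal
open Set

theorem dimH_range_le_of_dist_le {α X Y : Type*} [MetricSpace X] [MetricSpace Y]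
    {f : α → X} {g : α → Y} {C r : ℝ≥0} (hr : 0 < r)
    (hfg : ∀ a b, dist (g a) (g b) ≤ C * dist (f a) (f b) ^ (r : ℝ)) :
    dimH (range g) ≤ dimH (range f) / r := by
  cases isEmpty_or_nonempty α
  · simp [range_eq_empty]
  have hinv : ∀ a, g (Function.invFun f (f a)) = g a := fun a =>
    dist_le_zero.1 <| (hfg _ a).trans_eq <| by
      rw [Function.invFun_eq (f := f) ⟨a, rfl⟩, dist_self, Real.zero_rpow (by positivity),
        mul_zero]
  have hholder : HolderOnWith C r (g ∘ Function.invFun f) (range f) := by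
    rintro _ ⟨a, rfl⟩ _ ⟨b, rfl⟩
    rw [Function.comp_apply, Function.comp_apply, hinv, hinv, edist_dist, edist_dist,
      ENNReal.ofReal_rpow_of_nonneg dist_nonneg r.coe_nonneg, ← ENNReal.ofReal_coe_nnreal,
      ← ENNReal.ofReal_mul C.coe_nonneg]
    exact ENNReal.ofReal_le_ofReal (hfg a b)
  simpa [← range_comp, Function.comp_def, hinv] using hholder.dimH_image_le hr

@[simp] lemma bval_false : bval false = 0 := rfl

@[simp] lemma bval_true : bval true = 1 := rfl

lemma bval_le_one (b : Bool) : bval b ≤ 1 := by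
  cases b <;> simp

def binVal (v : ℕ → Bool) : ℝ := Real.ofDigits (finTwoEquiv.symm ∘ v)

lemma ofDigitsTerm_finTwoEquiv_symm (v : ℕ → Bool) (n : ℕ) :
    Real.ofDigitsTerm (finTwoEquiv.symm ∘ v) n = bval (v n) / 2 ^ (n + 1) := by
  cases h : v n <;> simp [Real.ofDigitsTerm, bval, finTwoEquiv, h, div_eq_mul_inv]

lemma binVal_nonneg (v : ℕ → Bool) : 0 ≤ binVal v := Real.ofDigits_nonneg _

lemma binVal_le_one (v : ℕ → Bool) : binVal v ≤ 1 := Real.ofDigits_le_one _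

lemma binVal_eq_half_add (v : ℕ → Bool) :
    binVal v = (bval (v 0) + binVal (fun n => v (n + 1))) / 2 := by
  rw [binVal, Real.ofDigits_eq_sum_add_ofDigits _ 1, Finset.sum_range_one,
    ofDigitsTerm_finTwoEquiv_symm]
  simp only [zero_add, pow_one, Nat.cast_ofNat, Function.comp_apply, binVal, Function.comp_def]
  ring

lemma binVal_le_of_eq_false {v : ℕ → Bool} {k : ℕ} (hv : ∀ i < k, v i = false) :
    binVal v ≤ (2 ^ k)⁻¹ := by
  rw [binVal, Real.ofDigits_eq_sum_add_ofDigits _ k, Finset.sum_eq_zero fun i hi => by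
    rw [ofDigitsTerm_finTwoEquiv_symm, hv i (Finset.mem_range.1 hi), bval, if_neg (by simp),
      zero_div]]
  simpa using Real.ofDigits_le_one _

lemma binVal_lt_one_of_eq_false {v : ℕ → Bool} {j : ℕ} (hv : v j = false) : binVal v < 1 := by
  induction j generalizing v with
  | zero =>
    rw [binVal_eq_half_add, hv, bval_false]
    linarith [binVal_le_one (fun n => v (n + 1))]
  | succ j ih =>
    rw [binVal_eq_half_add]
    linarith [ih (v := fun n => v (n + 1)) hv, bval_le_one (v 0)]

lemma binVal_lt_half {v : ℕ → Bool} {j : ℕ} (h0 : v 0 = false) (hv : v (j + 1) = false) :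
    binVal v < 1 / 2 := by
  rw [binVal_eq_half_add, h0, bval_false]
  linarith [binVal_lt_one_of_eq_false (v := fun n => v (n + 1)) hv]

lemma half_le_binVal {v : ℕ → Bool} (h0 : v 0 = true) : 1 / 2 ≤ binVal v := by
  rw [binVal_eq_half_add, h0, bval_true]
  linarith [binVal_nonneg (fun n => v (n + 1))]

lemma abs_binVal_sub_le {v w : ℕ → Bool} {n : ℕ} (h : ∀ i < n, v i = w i) :
    |binVal v - binVal w| ≤ (2 ^ n)⁻¹ := by
  simpa [binVal] using Real.abs_ofDigits_sub_ofDigits_le (b := 2) (x := finTwoEquiv.symm ∘ v)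
    (y := finTwoEquiv.symm ∘ w) fun i hi => congrArg _ (h i hi)

lemma inv_pow_le_binVal_sub {v w : ℕ → Bool} {m : ℕ} (h : ∀ i < m, v i = w i)
    (hv : v m = true) (hw : w m = false) (hw' : w (m + 1) = false) :
    (2 ^ (m + 2))⁻¹ ≤ binVal v - binVal w := by
  induction m generalizing v w with
  | zero =>
    have hw1 : binVal (fun n => w (n + 1)) ≤ (2 ^ 1)⁻¹ :=
      binVal_le_of_eq_false fun i hi => by rwa [Nat.lt_one_iff.1 hi]
    rw [binVal_eq_half_add v, binVal_eq_half_add w, hv, hw, bval_true, bval_false]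
    linarith [binVal_nonneg (fun n => v (n + 1))]
  | succ m ih =>
    have := ih (v := fun n => v (n + 1)) (w := fun n => w (n + 1))
      (fun i hi => h (i + 1) (by omega)) hv hw hw'
    rw [binVal_eq_half_add v, binVal_eq_half_add w, h 0 (by omega), pow_succ, mul_inv]
    linarith

lemma Icc_subset_range_binVal : Icc 0 1 ⊆ range binVal := by
  intro x hx
  obtain ⟨d, -, rfl⟩ := Real.ofDigits_SurjOn (b := 2) one_lt_two hx
  exact ⟨finTwoEquiv ∘ d, by simp [binVal, Function.comp_def]⟩

lemma pibar_fst (u : ℤ → Bool) : (pibar u).1 = binVal (fun n => u (n + 1)) := by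
  simp only [binVal, Real.ofDigits, ofDigitsTerm_finTwoEquiv_symm]
  rfl

lemma pibar_snd (u : ℤ → Bool) : (pibar u).2 = binVal (fun n => u (-n)) := by
  simp only [binVal, Real.ofDigits, ofDigitsTerm_finTwoEquiv_symm]
  rfl

@[simp] lemma shiftIter_zero (u : ℤ → Bool) : shiftIter 0 u = u := by
  funext m
  simp [shiftIter]

lemma shiftIter_shiftIter (a b : ℤ) (u : ℤ → Bool) :
    shiftIter a (shiftIter b u) = shiftIter (a + b) u := by
  funext m
  simp only [shiftIter, add_assoc]

/-- The sequences that `pibar` maps into `X`, where it conjugates the shift to `baker`. -/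
def IsAdmissible (u : ℤ → Bool) : Prop :=
  ∀ m : ℤ, (∃ j : ℕ, u (m + j) = false) ∧ ∃ j : ℕ, u (m - j) = false

lemma isAdmissible_shiftIter {u : ℤ → Bool} (hu : IsAdmissible u) (n : ℤ) :
    IsAdmissible (shiftIter n u) := fun m => by
  obtain ⟨⟨i, hi⟩, ⟨j, hj⟩⟩ := hu (m + n)
  exact ⟨⟨i, by simpa [shiftIter, add_right_comm] using hi⟩,
    ⟨j, by simpa [shiftIter, sub_add_eq_add_sub] using hj⟩⟩

namespace IsAdmissible

variable {u : ℤ → Bool}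

lemma pibar_mem_bakerX (hu : IsAdmissible u) : pibar u ∈ bakerX := by
  obtain ⟨⟨i, hi⟩, -⟩ := hu 1
  obtain ⟨-, ⟨j, hj⟩⟩ := hu 0
  rw [bakerX, mem_prod, pibar_fst, pibar_snd]
  refine ⟨⟨binVal_nonneg _, binVal_lt_one_of_eq_false (j := i) ?_⟩,
    ⟨binVal_nonneg _, binVal_lt_one_of_eq_false (j := j) ?_⟩⟩
  · simpa [add_comm] using hi
  · simpa using hj

lemma baker_pibar (hu : IsAdmissible u) : baker (pibar u) = pibar (shiftIter 1 u) := by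
  have hx : (pibar u).1 = (bval (u 1) + (pibar (shiftIter 1 u)).1) / 2 := by
    rw [pibar_fst, pibar_fst, binVal_eq_half_add]
    simp only [shiftIter]
    push_cast
    ring_nf
  have hy : (pibar (shiftIter 1 u)).2 = (bval (u 1) + (pibar u).2) / 2 := by
    rw [pibar_snd, pibar_snd, binVal_eq_half_add]
    simp only [shiftIter]
    push_cast
    ring_nf
  obtain ⟨⟨j, hj⟩, -⟩ := hu 2
  cases h1 : u 1
  · have : (pibar u).1 < 1 / 2 := by
      rw [pibar_fst]
      exact binVal_lt_half (j := j) (by simpa using h1) (by push_cast; ring_nf at hj ⊢; exact hj)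
    rw [h1, bval_false] at hx hy
    rw [baker, if_pos this]
    ext <;> simp only [hx, hy] <;> ring
  · have : ¬(pibar u).1 < 1 / 2 := by
      rw [pibar_fst, not_lt]
      exact half_le_binVal (by simpa using h1)
    rw [h1, bval_true] at hx hy
    rw [baker, if_neg this]
    ext <;> simp only [hx, hy] <;> ring

lemma bakerInv_baker {p : ℝ × ℝ} (hp : p ∈ bakerX) : bakerInv (baker p) = p := by
  obtain ⟨-, hy0, hy1⟩ := hp
  by_cases h : p.1 < 1 / 2
  · rw [baker, if_pos h, bakerInv, if_pos (by dsimp only; linarith)]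
    ext <;> dsimp only <;> ring
  · rw [baker, if_neg h, bakerInv, if_neg (by dsimp only; linarith)]
    ext <;> dsimp only <;> ring

lemma bakerInv_pibar (hu : IsAdmissible u) :
    bakerInv (pibar u) = pibar (shiftIter (-1) u) := by
  have hu' := isAdmissible_shiftIter hu (-1)
  rw [← bakerInv_baker hu'.pibar_mem_bakerX, hu'.baker_pibar, shiftIter_shiftIter,
    add_neg_cancel, shiftIter_zero]

lemma iterate_baker_pibar (hu : IsAdmissible u) (j : ℕ) :
    baker^[j] (pibar u) = pibar (shiftIter j u) := by
  induction j with
  | zero => simp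
  | succ j ih =>
    rw [Function.iterate_succ_apply', ih, (isAdmissible_shiftIter hu j).baker_pibar,
      shiftIter_shiftIter, add_comm, Nat.cast_succ]

lemma iterate_bakerInv_pibar (hu : IsAdmissible u) (j : ℕ) :
    bakerInv^[j] (pibar u) = pibar (shiftIter (-j) u) := by
  induction j with
  | zero => simp
  | succ j ih =>
    rw [Function.iterate_succ_apply', ih, (isAdmissible_shiftIter hu _).bakerInv_pibar,
      shiftIter_shiftIter, Nat.cast_succ, neg_add, add_comm]

lemma bakerIter_pibar (hu : IsAdmissible u) (n : ℤ) :
    bakerIter n (pibar u) = pibar (shiftIter n u) := by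
  unfold bakerIter
  split_ifs with hn
  · rw [hu.iterate_baker_pibar, Int.toNat_of_nonneg hn]
  · rw [hu.iterate_bakerInv_pibar, Int.toNat_of_nonneg (by omega), neg_neg]

lemma pibar_mem_survivor {H : Set (ℝ × ℝ)} (hu : IsAdmissible u)
    (hH : ∀ n, pibar (shiftIter n u) ∉ H) : pibar u ∈ survivor H :=
  ⟨hu.pibar_mem_bakerX, fun n => hu.bakerIter_pibar n ▸ hH n⟩

end IsAdmissible

section Sparse

variable {N : ℕ} {u : ℤ → Bool}

lemma eq_false_or_eq_false_add_one (hN : 2 ≤ N) (hu : ∀ m, u m = true → (N : ℤ) ∣ m) (m : ℤ) :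
    u m = false ∨ u (m + 1) = false := by
  by_contra! h
  simp only [ne_eq, Bool.not_eq_false] at h
  have := Int.le_of_dvd one_pos <| by simpa using dvd_sub (hu _ h.2) (hu _ h.1)
  omega

lemma isAdmissible_of_forall_dvd (hN : 2 ≤ N) (hu : ∀ m, u m = true → (N : ℤ) ∣ m) :
    IsAdmissible u := fun m => by
  refine ⟨?_, ?_⟩
  · rcases eq_false_or_eq_false_add_one hN hu m with h | h
    exacts [⟨0, by simpa using h⟩, ⟨1, by simpa using h⟩]
  · rcases eq_false_or_eq_false_add_one hN hu (m - 1) with h | h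
    exacts [⟨1, by simpa using h⟩, ⟨0, by simpa using h⟩]

lemma pibar_shiftIter_fst_le_or_snd_le {k : ℕ} (hk : 2 * k ≤ N)
    (hu : ∀ m, u m = true → (N : ℤ) ∣ m) (n : ℤ) :
    (pibar (shiftIter n u)).1 ≤ (2 ^ k)⁻¹ ∨ (pibar (shiftIter n u)).2 ≤ (2 ^ k)⁻¹ := by
  rw [pibar_fst, pibar_snd]
  by_contra! h
  obtain ⟨a, ha, hua⟩ : ∃ a < k, u (a + 1 + n) = true := by
    by_contra! h'
    exact h.1.not_ge (binVal_le_of_eq_false fun i hi => by simpa [shiftIter] using h' i hi)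
  obtain ⟨b, hb, hub⟩ : ∃ b < k, u (-b + n) = true := by
    by_contra! h'
    exact h.2.not_ge (binVal_le_of_eq_false fun i hi => by simpa [shiftIter] using h' i hi)
  have hdvd : (N : ℤ) ∣ a + b + 1 := by
    have := dvd_sub (hu _ hua) (hu _ hub)
    rwa [show (a + 1 + n - (-b + n) : ℤ) = a + b + 1 by ring] at this
  have := Int.le_of_dvd (by positivity) hdvd
  omega

end Sparse

/-- The sequence carrying the bits of `c` at the positions `N, 2N, 3N, …` and `false` elsewhere. -/
def spread (N : ℕ) (c : ℕ → Bool) : ℤ → Bool :=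
  Function.extend (fun j : ℕ => ((j + 1) * N : ℤ)) c fun _ => false

section Spread

variable {N : ℕ}

lemma injective_succ_mul (hN : 0 < N) : Function.Injective fun j : ℕ => ((j + 1) * N : ℤ) :=
  fun i j h => by simpa [hN.ne'] using h

lemma spread_succ_mul (hN : 0 < N) (c : ℕ → Bool) (j : ℕ) : spread N c ((j + 1) * N) = c j :=
  (injective_succ_mul hN).extend_apply c _ j

lemma dvd_of_spread_eq_true {c : ℕ → Bool} {m : ℤ} (h : spread N c m = true) : (N : ℤ) ∣ m := by
  by_contra hm
  rw [spread, Function.extend_apply' _ _ _ fun ⟨j, hj⟩ => hm ⟨j + 1, by rw [← hj, mul_comm]⟩]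
    at h
  exact Bool.false_ne_true h

lemma spread_eq_of_lt (hN : 0 < N) {c c' : ℕ → Bool} {j : ℕ} (h : ∀ i < j, c i = c' i) {m : ℤ}
    (hm : m < (j + 1) * N) : spread N c m = spread N c' m := by
  by_cases hm' : ∃ i : ℕ, ((i + 1) * N : ℤ) = m
  · obtain ⟨i, rfl⟩ := hm'
    have : i < j := by
      have := lt_of_mul_lt_mul_right hm (by positivity)
      omega
    rw [spread_succ_mul hN, spread_succ_mul hN, h i this]
  · rw [spread, spread, Function.extend_apply' _ _ _ hm', Function.extend_apply' _ _ _ hm']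

lemma inv_pow_le_dist_pibar_spread (hN : 2 ≤ N) {c c' : ℕ → Bool} {j : ℕ}
    (h : ∀ i < j, c i = c' i) (hj : c j ≠ c' j) :
    (2 ^ ((j + 1) * N + 1))⁻¹ ≤ dist (pibar (spread N c)) (pibar (spread N c')) := by
  wlog hc : c j = true generalizing c c'
  · rw [dist_comm]
    exact this (fun i hi => (h i hi).symm) hj.symm (by simpa [hc] using hj.symm)
  have hc' : c' j = false := by simpa [hc] using hj.symm
  have hN0 : 0 < N := by omega
  obtain ⟨m, hm⟩ := Nat.exists_eq_add_one_of_ne_zero (by positivity : (j + 1) * N ≠ 0)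
  have hm' : ((j + 1) * N : ℤ) = m + 1 := by exact_mod_cast hm
  have hfalse : spread N c' (m + 1 + 1) = false := by
    by_contra! hne
    have hdvd := dvd_sub (dvd_of_spread_eq_true (by simpa using hne))
      (⟨j + 1, by ring⟩ : (N : ℤ) ∣ (j + 1) * N)
    rw [hm', add_sub_cancel_left] at hdvd
    have := Int.le_of_dvd one_pos hdvd
    omega
  have hsep := inv_pow_le_binVal_sub (v := fun n => spread N c (n + 1))
    (w := fun n => spread N c' (n + 1)) (m := m)
    (fun i hi => spread_eq_of_lt hN0 h (by omega))
    (by simpa [← hm', hc] using spread_succ_mul hN0 c j)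
    (by simpa [← hm', hc'] using spread_succ_mul hN0 c' j)
    (by simpa using hfalse)
  rw [← pibar_fst, ← pibar_fst] at hsep
  rw [hm, add_assoc, Prod.dist_eq, Real.dist_eq]
  exact hsep.trans ((le_abs_self _).trans (le_max_left _ _))

end Spread

lemma inv_two_pow_le_rpow {N : ℕ} (hN : 0 < N) (j : ℕ) :
    ((2 : ℝ) ^ (j + 2))⁻¹ ≤ ((2 ^ ((j + 1) * N + 1))⁻¹) ^ (N : ℝ)⁻¹ := by
  rw [Real.inv_rpow (by positivity), inv_le_inv₀ (by positivity) (by positivity),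
    ← Real.rpow_natCast, ← Real.rpow_natCast, ← Real.rpow_mul zero_le_two,
    Real.rpow_le_rpow_left_iff one_lt_two, mul_inv_le_iff₀ (by positivity)]
  have : (1 : ℝ) ≤ N := by exact_mod_cast hN
  push_cast
  nlinarith

lemma dist_binVal_le_dist_pibar_spread {N : ℕ} (hN : 2 ≤ N) (c c' : ℕ → Bool) :
    dist (binVal c) (binVal c') ≤
      4 * dist (pibar (spread N c)) (pibar (spread N c')) ^ (N : ℝ)⁻¹ := by
  by_cases hcc : ∃ j, c j ≠ c' j
  · let j := Nat.find hcc
    have hagree : ∀ i < j, c i = c' i := fun i hi => not_not.1 (Nat.find_min hcc hi)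
    calc dist (binVal c) (binVal c') ≤ (2 ^ j)⁻¹ := abs_binVal_sub_le hagree
      _ = 4 * (2 ^ (j + 2))⁻¹ := by ring
      _ ≤ 4 * ((2 ^ ((j + 1) * N + 1))⁻¹) ^ (N : ℝ)⁻¹ := by
        gcongr
        exact inv_two_pow_le_rpow (by omega) j
      _ ≤ 4 * dist (pibar (spread N c)) (pibar (spread N c')) ^ (N : ℝ)⁻¹ := by
        gcongr
        exact inv_pow_le_dist_pibar_spread hN hagree (Nat.find_spec hcc)
  · push Not at hcc
    rw [funext hcc, dist_self]
    positivity

lemma inv_le_dimH_range_pibar_spread {N : ℕ} (hN : 2 ≤ N) :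
    (N : ℝ≥0∞)⁻¹ ≤ dimH (range fun c => pibar (spread N c)) := by
  have hN0 : (N : ℝ≥0) ≠ 0 := by simp only [ne_eq, Nat.cast_eq_zero]; omega
  have hr : 0 < (N : ℝ≥0)⁻¹ := inv_pos.2 (pos_iff_ne_zero.2 hN0)
  have hholder := dimH_range_le_of_dist_le (g := binVal) (C := 4) hr
    (by simpa using dist_binVal_le_dist_pibar_spread hN)
  have hone : 1 ≤ dimH (range binVal) := by
    calc (1 : ℝ≥0∞) = dimH (Icc (0 : ℝ) 1) := by
          rw [Real.dimH_of_nonempty_interior (by simp), Module.finrank_self, Nat.cast_one]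
      _ ≤ dimH (range binVal) := dimH_mono Icc_subset_range_binVal
  have := (ENNReal.le_div_iff_mul_le (by simp [hr.ne']) (by simp)).1 (hone.trans hholder)
  rwa [one_mul, ENNReal.coe_inv hN0, ENNReal.coe_natCast] at this

lemma range_pibar_spread_subset_survivor {N k : ℕ} (hN : 2 ≤ N) (hk : 2 * k ≤ N)
    {H : Set (ℝ × ℝ)} (hH : ∀ p ∈ H, (2 ^ k)⁻¹ < p.1 ∧ (2 ^ k)⁻¹ < p.2) :
    range (fun c => pibar (spread N c)) ⊆ survivor H := by
  rintro _ ⟨c, rfl⟩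
  have hdvd : ∀ m, spread N c m = true → (N : ℤ) ∣ m := fun m => dvd_of_spread_eq_true
  refine (isAdmissible_of_forall_dvd hN hdvd).pibar_mem_survivor fun n hn => ?_
  rcases pibar_shiftIter_fst_le_or_snd_le hk hdvd n with h | h
  exacts [(hH _ hn).1.not_ge h, (hH _ hn).2.not_ge h]

lemma exists_forall_inv_two_pow_lt {H : Set (ℝ × ℝ)}
    (hH : closure H ⊆ Ioo (0 : ℝ) 1 ×ˢ Ioo (0 : ℝ) 1) :
    ∃ k : ℕ, ∀ p ∈ H, (2 ^ k)⁻¹ < p.1 ∧ (2 ^ k)⁻¹ < p.2 := by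
  have hcompact : IsCompact (closure H) :=
    Metric.isCompact_of_isClosed_isBounded isClosed_closure
      (((Metric.isBounded_Ioo 0 1).prod (Metric.isBounded_Ioo 0 1)).subset hH)
  obtain ⟨δ, hδ, hHδ⟩ := hcompact.exists_forall_le' (f := fun p : ℝ × ℝ => min p.1 p.2)
    (continuous_fst.min continuous_snd).continuousOn
    fun p hp => lt_min (hH hp).1.1 (hH hp).2.1
  obtain ⟨k, hk⟩ := exists_pow_lt_of_lt_one hδ (by norm_num : (2 : ℝ)⁻¹ < 1)
  refine ⟨k, fun p hp => ?_⟩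
  have := hHδ p (subset_closure hp)
  rw [← inv_pow]
  exact ⟨hk.trans_le (this.trans (min_le_left _ _)), hk.trans_le (this.trans (min_le_right _ _))⟩

/-- An interior hole is not a dimension trap: if `closure H ⊆ (0,1)×(0,1)`,
then the survivor set has positive Hausdorff dimension. -/
theorem dimH_survivor_pos_of_interior_hole (H : Set (ℝ × ℝ))
    (hH : closure H ⊆ Set.Ioo (0:ℝ) 1 ×ˢ Set.Ioo (0:ℝ) 1) :
    0 < dimH (survivor H) := by
  obtain ⟨k, hk⟩ := exists_forall_inv_two_pow_lt hH
  calc (0 : ℝ≥0∞) < ((2 * k + 2 : ℕ) : ℝ≥0∞)⁻¹ := ENNReal.inv_pos.2 (ENNReal.natCast_ne_top _)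
    _ ≤ dimH (range fun c => pibar (spread (2 * k + 2) c)) :=
      inv_le_dimH_range_pibar_spread (by omega)
    _ ≤ dimH (survivor H) :=
      dimH_mono (range_pibar_spread_subset_survivor (by omega) (by omega) hk)
end
end

section
/- Let u ∈ {0,1}^ℤ satisfy π(σ^n u) ∉ Δ for all n ∈ ℤ. Then either u is eventually periodic in both directions (there exist p ≥ 1 and N ∈ ℤ with u_{n+p} = u_n for all n ≥ N, and there exist q ≥ 1 and M ∈ ℤ with u_{n−q} = u_n for all n ≤ M), or the orbit {π(σ^n u) : n ∈ ℤ} comes arbitrarily close to (0,1/2) or to (1/2,1): for every ε > 0 there exists n ∈ ℤ with ‖π(σ^n u) − (0,1/2)‖ < ε or ‖π(σ^n u) − (1/2,1)‖ < ε. -/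
/-!
Write `pibar (shiftIter n u) = (x, y)`, where `x` is the binary number read off
`u (n + 1), u (n + 2), …` and `y` the one read off `u n, u (n - 1), …`. Bounding `x` and `y`
through the positions of a few known 0s and 1s shows that two local patterns put the point
into `Δ`: a gap of length `≥ 3` between consecutive 1s that is longer than the preceding gap,
and a run of `≥ 2` ones between consecutive 0s that is longer than the following run.

If `00` occurs infinitely often, a gap `≤ 2` between 1s would force all later gaps to be
`≤ 2`; so the gaps are `≥ 3` and non-increasing, hence eventually constant, and `u` is
eventually periodic. Otherwise the runs of 1s are eventually non-decreasing, so either they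
stabilise (periodicity again) or they grow without bound, which drives the orbit to `(1/2, 1)`.
The behaviour at `-∞` follows by applying this to `m ↦ !u (1 - m)`, which conjugates `σ`
to `σ⁻¹` and acts on the square by the reflection `(x, y) ↦ (1 - y, 1 - x)`; it preserves
`Δ` and swaps `(1/2, 1)` with `(0, 1/2)`.
-/

open MeasureTheory

noncomputable section

/-- The open quadrilateral `Δ` with vertices `(0,1), (1/2,1), (1/3,2/3), (0,1/2)`. -/
def Delta : Set (ℝ × ℝ) :=
  {p | 0 < p.1 ∧ p.2 < 1 ∧ 2 * p.1 < p.2 ∧ (p.1 + 1) / 2 < p.2}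

/-- The open quadrilateral `Δ'` with vertices `(0,1/2), (5/24,2/3), (1/2,1), (0,1)`. -/
def Delta' : Set (ℝ × ℝ) :=
  {p | 0 < p.1 ∧ p.2 < 1 ∧ (8 * p.1 + 5) / 10 < p.2 ∧ (8 * p.1 + 3) / 7 < p.2}

/-- The open quadrilateral `Δ''` with vertices `(0,1/2), (1/3,19/24), (1/2,1), (0,1)`. -/
def Delta'' : Set (ℝ × ℝ) :=
  {p | 0 < p.1 ∧ p.2 < 1 ∧ (7 * p.1 + 4) / 8 < p.2 ∧ (10 * p.1 + 3) / 8 < p.2}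


open Filter

def binaryValue (b : ℕ → Bool) : ℝ := ∑' n : ℕ, bval (b n) / 2 ^ (n + 1)

section binaryValue

variable {b : ℕ → Bool} {S : Finset ℕ} {j : ℕ}

lemma bval_div_two_pow_nonneg (x : Bool) (n : ℕ) : 0 ≤ bval x / 2 ^ (n + 1) := by
  cases x <;> simp [bval]

lemma bval_div_two_pow_le (x : Bool) (n : ℕ) :
    bval x / 2 ^ (n + 1) ≤ (1 / 2 : ℝ) ^ (n + 1) := by
  cases x <;> simp [bval]

lemma summable_bval_div_two_pow (b : ℕ → Bool) : Summable fun n => bval (b n) / 2 ^ (n + 1) :=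
  .of_nonneg_of_le (fun n => bval_div_two_pow_nonneg _ n) (fun n => bval_div_two_pow_le _ n)
    ((summable_geometric_two.mul_left (1 / 2)).congr fun n => (pow_succ' _ n).symm)

lemma tsum_half_pow_succ : ∑' n : ℕ, (1 / 2 : ℝ) ^ (n + 1) = 1 := by
  simp_rw [pow_succ', tsum_mul_left, tsum_geometric_two]
  norm_num

lemma half_pow_le_half_pow {m n : ℕ} (h : m ≤ n) : (1 / 2 : ℝ) ^ n ≤ (1 / 2) ^ m :=
  pow_le_pow_of_le_one (by norm_num) (by norm_num) h

lemma sum_range_half_pow_succ (m : ℕ) :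
    ∑ k ∈ Finset.range m, (1 / 2 : ℝ) ^ (k + 1) = 1 - (1 / 2) ^ m := by
  induction m with
  | zero => simp
  | succ m ih => rw [Finset.sum_range_succ, ih, pow_succ]; ring

lemma binaryValue_not (b : ℕ → Bool) : binaryValue (fun n => !b n) = 1 - binaryValue b := by
  rw [eq_sub_iff_add_eq, binaryValue, binaryValue, ← (summable_bval_div_two_pow _).tsum_add
    (summable_bval_div_two_pow b), ← tsum_half_pow_succ]
  exact tsum_congr fun n => by cases b n <;> simp [bval]

lemma binaryValue_eq (b : ℕ → Bool) :
    binaryValue b = (bval (b 0) + binaryValue fun n => b (n + 1)) / 2 := by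
  rw [binaryValue, (summable_bval_div_two_pow b).tsum_eq_zero_add, binaryValue,
    add_div, ← tsum_div_const]
  congr 1
  · ring
  · exact tsum_congr fun n => by ring

lemma sum_le_binaryValue (hS : ∀ k ∈ S, b k = true) :
    ∑ k ∈ S, (1 / 2 : ℝ) ^ (k + 1) ≤ binaryValue b := by
  refine le_of_eq_of_le (Finset.sum_congr rfl fun k hk => ?_)
    ((summable_bval_div_two_pow b).sum_le_tsum S fun n _ => bval_div_two_pow_nonneg _ n)
  simp [hS k hk, bval]

lemma sum_lt_binaryValue (hS : ∀ k ∈ S, b k = true) (hj : j ∉ S) (hbj : b j = true) :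
    ∑ k ∈ S, (1 / 2 : ℝ) ^ (k + 1) < binaryValue b := by
  have h := sum_le_binaryValue (Finset.forall_mem_insert _ _ _ |>.2 ⟨hbj, hS⟩)
  rw [Finset.sum_insert hj] at h
  linarith [pow_pos (one_half_pos (α := ℝ)) (j + 1)]

lemma binaryValue_le_one_sub_sum (hS : ∀ k ∈ S, b k = false) :
    binaryValue b ≤ 1 - ∑ k ∈ S, (1 / 2 : ℝ) ^ (k + 1) := by
  have h := sum_le_binaryValue (b := fun n => !b n) (S := S) fun k hk => by simp [hS k hk]
  rw [binaryValue_not] at h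
  linarith

lemma binaryValue_lt_one_sub_sum (hS : ∀ k ∈ S, b k = false) (hj : j ∉ S)
    (hbj : b j = false) :
    binaryValue b < 1 - ∑ k ∈ S, (1 / 2 : ℝ) ^ (k + 1) := by
  have h := binaryValue_le_one_sub_sum (Finset.forall_mem_insert _ _ _ |>.2 ⟨hbj, hS⟩)
  rw [Finset.sum_insert hj] at h
  linarith [pow_pos (one_half_pos (α := ℝ)) (j + 1)]

end binaryValue

lemma pibar_shiftIter (u : ℤ → Bool) (n : ℤ) :
    pibar (shiftIter n u) =
      (binaryValue fun k => u (n + 1 + k), binaryValue fun k => u (n - k)) := by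
  simp only [pibar, shiftIter, binaryValue, Prod.mk.injEq]
  constructor <;> refine tsum_congr fun k => ?_ <;> congr 3 <;> ring

def AvoidsDelta (u : ℤ → Bool) : Prop := ∀ n : ℤ, pibar (shiftIter n u) ∉ Delta

namespace AvoidsDelta

variable {u : ℤ → Bool}

theorem gap_le_previous_gap (hav : AvoidsDelta u) {f b a c e : ℤ}
    (hfa : f < a) (hf : u f = false) (hba : b < a) (hb : u b = true) (ha : u a = true)
    (hgap : ∀ m, a < m → m < c → u m = false) (hc : u c = true) (hce : c < e)
    (he : u e = false) (hac : a + 3 ≤ c) :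
    c - a ≤ a - b := by
  by_contra! hlt
  obtain ⟨g, rfl⟩ : ∃ g : ℕ, c = a + 1 + g := ⟨(c - a - 1).toNat, by omega⟩
  obtain ⟨d, rfl⟩ : ∃ d : ℕ, b = a - d := ⟨(a - b).toNat, by omega⟩
  set x := binaryValue fun k => u (a + 1 + k)
  set y := binaryValue fun k => u (a - k)
  have hx_pos : 0 < x := by
    simpa using sum_lt_binaryValue (S := ∅) (j := g) (by simp) (by simp) hc
  have hx_lt : x < (1 / 2) ^ g := by
    have h := binaryValue_lt_one_sub_sum (b := fun k => u (a + 1 + k)) (S := Finset.range g)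
      (j := (e - a - 1).toNat) (fun k hk => hgap _ (by omega) (by simp at hk; omega))
      (by simp; omega) (by convert he using 2; omega)
    rwa [sum_range_half_pow_succ, sub_sub_cancel] at h
  have hy_ge : 1 / 2 + (1 / 2) ^ (d + 1) ≤ y := by
    have h := sum_le_binaryValue (b := fun k => u (a - k)) (S := {0, d})
      (by simpa [Finset.forall_mem_insert] using ⟨ha, hb⟩)
    rwa [Finset.sum_pair (by omega), zero_add, pow_one] at h
  have hy_lt : y < 1 := by
    simpa using binaryValue_lt_one_sub_sum (b := fun k => u (a - k)) (S := ∅)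
      (j := (a - f).toNat) (by simp) (by simp) (by convert hf using 2; omega)
  have hgd : (1 / 2 : ℝ) ^ g ≤ (1 / 2) ^ d := half_pow_le_half_pow (by omega)
  have hg2 : (1 / 2 : ℝ) ^ g ≤ (1 / 2) ^ 2 := half_pow_le_half_pow (by omega)
  have hd : (1 / 2 : ℝ) ^ (d + 1) = (1 / 2) ^ d / 2 := by rw [pow_succ]; ring
  refine hav a ?_
  rw [pibar_shiftIter]
  exact ⟨hx_pos, hy_lt, by norm_num at hg2; linarith, by linarith⟩

theorem run_le_next_run (hav : AvoidsDelta u) {p q r e : ℤ}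
    (hp : u p = false) (hrun : ∀ m, p < m → m < q → u m = true) (hq : u q = false)
    (hq1 : u (q + 1) = true) (hqr : q < r) (hr : u r = false) (hre : r < e)
    (he : u e = false) (hpq : p + 3 ≤ q) :
    q - p ≤ r - q := by
  by_contra! hlt
  obtain ⟨l, hql⟩ : ∃ l : ℕ, q = p + 1 + l := ⟨(q - p - 1).toNat, by omega⟩
  obtain ⟨l', hrl'⟩ : ∃ l' : ℕ, r = q + 1 + l' := ⟨(r - q - 1).toNat, by omega⟩
  set n := q - 1
  set x := binaryValue fun k => u (n + 1 + k)
  set y := binaryValue fun k => u (n - k)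
  have hx_pos : 0 < x := by
    simpa using sum_lt_binaryValue (S := ∅) (j := 1) (by simp) (by simp)
      (by convert hq1 using 2; omega)
  have hx_lt : x < 1 / 2 - (1 / 2) ^ (l' + 2) := by
    have h := binaryValue_lt_one_sub_sum (b := fun k => u (n + 1 + k)) (S := {0, l' + 1})
      (j := (e - n - 1).toNat)
      (by simpa [Finset.forall_mem_insert] using
        ⟨by convert hq using 2; omega, by convert hr using 2; omega⟩)
      (by simp; omega) (by convert he using 2; omega)
    rw [Finset.sum_pair (by omega)] at h
    linarith
  have hy_ge : 1 - (1 / 2) ^ l ≤ y := by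
    have h := sum_le_binaryValue (b := fun k => u (n - k)) (S := Finset.range l)
      (fun k hk => hrun _ (by simp at hk; omega) (by omega))
    rwa [sum_range_half_pow_succ] at h
  have hy_lt : y < 1 := by
    simpa using binaryValue_lt_one_sub_sum (b := fun k => u (n - k)) (S := ∅) (j := l)
      (by simp) (by simp) (by convert hp using 2; omega)
  have hll' : (1 / 2 : ℝ) ^ l ≤ (1 / 2) ^ (l' + 1) := half_pow_le_half_pow (by omega)
  have hl2 : (1 / 2 : ℝ) ^ l ≤ (1 / 2) ^ 2 := half_pow_le_half_pow (by omega)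
  have hl' : (1 / 2 : ℝ) ^ (l' + 2) = (1 / 2) ^ (l' + 1) / 2 := by rw [pow_succ]; ring
  refine hav n ?_
  rw [pibar_shiftIter]
  exact ⟨hx_pos, hy_lt, by linarith, by norm_num at hl2; linarith⟩

end AvoidsDelta

lemma dist_pibar_shiftIter_le {u : ℤ → Bool} {q : ℤ} {k : ℕ} (hq : u q = false)
    (hleft : ∀ m, q - k ≤ m → m < q → u m = true)
    (hright : ∀ m, q < m → m ≤ q + k → u m = true) :
    dist (pibar (shiftIter (q - 1) u)) (1 / 2, 1) ≤ (1 / 2) ^ k := by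
  rw [pibar_shiftIter, sub_add_cancel]
  set x := binaryValue fun j => u (q + j)
  set y := binaryValue fun j => u (q - 1 - j)
  have hx_le : x ≤ 1 / 2 := by
    have h := binaryValue_le_one_sub_sum (b := fun j => u (q + j)) (S := {0}) (by simpa using hq)
    norm_num at h
    linarith
  have hx_ge : 1 / 2 - (1 / 2) ^ (k + 1) ≤ x := by
    have h := sum_le_binaryValue (b := fun j => u (q + (j + 1 : ℕ)))
      (S := Finset.range k)
      (fun j hj => hright _ (by omega) (by simp at hj; omega))
    have hx : x = (binaryValue fun j => u (q + (j + 1 : ℕ))) / 2 := by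
      rw [show x = _ from binaryValue_eq _]
      simp [bval, hq]
    rw [sum_range_half_pow_succ] at h
    rw [pow_succ]
    linarith
  have hy_ge : 1 - (1 / 2) ^ k ≤ y := by
    have h := sum_le_binaryValue (b := fun j => u (q - 1 - j)) (S := Finset.range k)
      (fun j hj => hleft _ (by simp at hj; omega) (by omega))
    rwa [sum_range_half_pow_succ] at h
  have hy_le : y ≤ 1 := by
    simpa using binaryValue_le_one_sub_sum (b := fun j => u (q - 1 - j)) (S := ∅) (by simp)
  have hk : (1 / 2 : ℝ) ^ (k + 1) ≤ (1 / 2) ^ k := half_pow_le_half_pow (by omega)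
  rw [Prod.dist_eq, Real.dist_eq, Real.dist_eq]
  exact max_le (abs_sub_le_iff.2 ⟨by linarith, by linarith⟩)
    (abs_sub_le_iff.2 ⟨by linarith, by linarith⟩)

def IsEventuallyPeriodic (u : ℤ → Bool) : Prop :=
  ∃ p : ℕ, 1 ≤ p ∧ ∃ N : ℤ, ∀ n : ℤ, N ≤ n → u (n + p) = u n

structure EnumeratesOccurrences (u : ℤ → Bool) (w : Bool) (s : ℕ → ℤ) : Prop where
  strictMono : StrictMono s
  eq : ∀ i, u (s i) = w
  eq_not : ∀ i m, s i < m → m < s (i + 1) → u m = !w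

lemma exists_enumeratesOccurrences {u : ℤ → Bool} {w : Bool} (hw : ∃ᶠ n in atTop, u n = w)
    (N : ℤ) : ∃ s, EnumeratesOccurrences u w s ∧ N ≤ s 0 := by
  set P : ℕ → Prop := fun k => u (N + k) = w
  have hP : {k | P k}.Infinite := Nat.frequently_atTop_iff_infinite.1 <|
    frequently_atTop.2 fun a => by
      obtain ⟨n, hn, hnw⟩ := frequently_atTop.1 hw (N + a)
      exact ⟨(n - N).toNat, by omega, by simp only [P]; convert hnw using 2; omega⟩
  refine ⟨fun i => N + Nat.nth P i,
    ⟨fun i j hij => ?_, fun i => Nat.nth_mem_of_infinite hP i, fun i m hlo hhi => ?_⟩,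
    by simp⟩
  · simpa using Nat.nth_strictMono hP hij
  · have hle : ¬(m - N).toNat ≤ Nat.nth P i := by omega
    have hP' : ¬P (m - N).toNat := fun h => hle (Nat.le_nth_of_lt_nth_succ (by omega) h)
    simp only [P, show N + ((m - N).toNat : ℤ) = m by omega] at hP'
    exact Bool.eq_not.2 hP'

lemma StrictMono.exists_le_lt_succ {s : ℕ → ℤ} (hs : StrictMono s) {i₀ : ℕ} {n : ℤ}
    (hn : s i₀ ≤ n) : ∃ j, i₀ ≤ j ∧ s j ≤ n ∧ n < s (j + 1) := by
  induction n, hn using Int.leInduction with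
  | base => exact ⟨i₀, le_rfl, le_rfl, hs (lt_add_one i₀)⟩
  | succ n _ ih =>
    obtain ⟨j, hj, hjn, hnj⟩ := ih
    by_cases h : n + 1 < s (j + 1)
    · exact ⟨j, hj, by omega, h⟩
    · exact ⟨j + 1, by omega, by omega, by have := hs (lt_add_one (j + 1)); omega⟩

namespace EnumeratesOccurrences

variable {u : ℤ → Bool} {w : Bool} {s : ℕ → ℤ}

lemma exists_three_le_sub (hs : EnumeratesOccurrences u w s) {i₀ : ℕ} {n : ℤ}
    (hn : s i₀ ≤ n) (h0 : u n ≠ w) (h1 : u (n + 1) ≠ w) :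
    ∃ j, i₀ ≤ j ∧ 3 ≤ s (j + 1) - s j := by
  obtain ⟨j, hj, hjn, hnj⟩ := hs.strictMono.exists_le_lt_succ hn
  have hjn' : s j ≠ n := fun h => h0 (h ▸ hs.eq j)
  have hnj' : s (j + 1) ≠ n + 1 := fun h => h1 (h ▸ hs.eq (j + 1))
  exact ⟨j, hj, by omega⟩

lemma isEventuallyPeriodic (hs : EnumeratesOccurrences u w s) {p : ℕ} (hp : 1 ≤ p) {i₀ : ℕ}
    (hstep : ∀ i, i₀ ≤ i → s (i + 1) = s i + p) : IsEventuallyPeriodic u := by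
  refine ⟨p, hp, s i₀, fun n hn => ?_⟩
  obtain ⟨j, hj, hjn, hnj⟩ := hs.strictMono.exists_le_lt_succ hn
  have h1 := hstep j hj
  have h2 := hstep (j + 1) (by omega)
  rcases hjn.eq_or_lt with rfl | hlt
  · rw [hs.eq, ← h1, hs.eq]
  · rw [hs.eq_not j n hlt hnj, hs.eq_not (j + 1) (n + p) (by omega) (by omega)]

end EnumeratesOccurrences

lemma Int.exists_forall_ge_eq_of_monotone {f : ℕ → ℤ} (hf : Monotone f)
    (hb : BddAbove (Set.range f)) : ∃ i₀, ∀ i, i₀ ≤ i → f i = f i₀ := by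
  obtain ⟨i₀, hi₀⟩ := Int.csSup_mem (Set.range_nonempty f) hb
  exact ⟨i₀, fun i hi => le_antisymm (hi₀ ▸ le_csSup hb ⟨i, rfl⟩) (hf hi)⟩

lemma Int.exists_forall_ge_eq_of_antitone {f : ℕ → ℤ} (hf : Antitone f)
    (hb : BddBelow (Set.range f)) : ∃ i₀, ∀ i, i₀ ≤ i → f i = f i₀ := by
  obtain ⟨i₀, hi₀⟩ := Int.csInf_mem (Set.range_nonempty f) hb
  exact ⟨i₀, fun i hi => le_antisymm (hf hi) (hi₀ ▸ csInf_le hb ⟨i, rfl⟩)⟩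

lemma isEventuallyPeriodic_of_eventually_eq {u : ℤ → Bool} {w : Bool}
    (h : ∀ᶠ n in atTop, u n = w) : IsEventuallyPeriodic u := by
  obtain ⟨N, hN⟩ := eventually_atTop.1 h
  exact ⟨1, le_rfl, N, fun n hn => by rw [Nat.cast_one, hN n hn, hN (n + 1) (by omega)]⟩

namespace AvoidsDelta

variable {u : ℤ → Bool}

theorem isEventuallyPeriodic_of_frequently_zero_zero (hav : AvoidsDelta u)
    (h1 : ∃ᶠ n in atTop, u n = true)
    (h00 : ∃ᶠ n in atTop, u n = false ∧ u (n + 1) = false) :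
    IsEventuallyPeriodic u := by
  have h0 : ∃ᶠ n in atTop, u n = false := h00.mono fun _ h => h.1
  obtain ⟨f, hf⟩ := h0.exists
  obtain ⟨s, hs, hfs⟩ := exists_enumeratesOccurrences h1 (f + 1)
  have hgap : ∀ i, 3 ≤ s (i + 1 + 1) - s (i + 1) →
      s (i + 1 + 1) - s (i + 1) ≤ s (i + 1) - s i := by
    intro i h3
    obtain ⟨e, he, hue⟩ := frequently_atTop.1 h0 (s (i + 1 + 1) + 1)
    have hs0 := hs.strictMono.monotone (Nat.zero_le (i + 1))
    exact hav.gap_le_previous_gap (f := f) (e := e) (by omega) hf (hs.strictMono (by omega))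
      (hs.eq i) (hs.eq (i + 1)) (hs.eq_not (i + 1)) (hs.eq (i + 1 + 1)) (by omega) hue (by omega)
  have three_le : ∀ i, 3 ≤ s (i + 1) - s i := by
    by_contra! ⟨i, hi⟩
    have hlt : ∀ j, i ≤ j → s (j + 1) - s j < 3 := by
      intro j hj
      induction j, hj using Nat.le_induction with
      | base => exact hi
      | succ j _ ih => by_contra! h; have := hgap j h; omega
    obtain ⟨n, hn, hn0, hn1⟩ := frequently_atTop.1 h00 (s i)
    obtain ⟨j, hj, h3⟩ := hs.exists_three_le_sub hn (by simp [hn0]) (by simp [hn1])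
    exact (hlt j hj).not_ge h3
  obtain ⟨i₀, hi₀⟩ := Int.exists_forall_ge_eq_of_antitone (f := fun i => s (i + 1) - s i)
    (antitone_nat_of_succ_le fun i => hgap i (three_le _))
    ⟨3, by simpa [lowerBounds] using three_le⟩
  have h3 := three_le i₀
  exact hs.isEventuallyPeriodic (p := (s (i₀ + 1) - s i₀).toNat) (by omega)
    fun i hi => by have := hi₀ i hi; omega

theorem isEventuallyPeriodic_or_approaches_of_eventually_one_after_zero
    (hav : AvoidsDelta u) (h0 : ∃ᶠ n in atTop, u n = false)
    (h01 : ∀ᶠ n in atTop, u n = false → u (n + 1) = true) :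
    IsEventuallyPeriodic u ∨
      ∀ ε : ℝ, 0 < ε → ∃ n : ℤ, dist (pibar (shiftIter n u)) (1 / 2, 1) < ε := by
  obtain ⟨N, hN⟩ := eventually_atTop.1 h01
  obtain ⟨t, ht, hNt⟩ := exists_enumeratesOccurrences h0 N
  have hone : ∀ i, u (t i + 1) = true := fun i =>
    hN _ (hNt.trans (ht.strictMono.monotone (Nat.zero_le i))) (ht.eq i)
  have two_le : ∀ i, 2 ≤ t (i + 1) - t i := by
    intro i
    have hne : t (i + 1) ≠ t i + 1 := fun h => by simpa [← h, ht.eq] using hone i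
    have := ht.strictMono (lt_add_one i)
    omega
  have hmono : Monotone fun i => t (i + 1) - t i := by
    refine monotone_nat_of_le_succ fun i => ?_
    by_cases h3 : 3 ≤ t (i + 1) - t i
    · obtain ⟨e, he, hue⟩ := frequently_atTop.1 h0 (t (i + 1 + 1) + 1)
      exact hav.run_le_next_run (e := e) (ht.eq i) (ht.eq_not i) (ht.eq (i + 1))
        (hone (i + 1)) (ht.strictMono (lt_add_one _)) (ht.eq (i + 1 + 1)) (by omega) hue
        (by omega)
    · have := two_le (i + 1)
      omega
  by_cases hbdd : BddAbove (Set.range fun i => t (i + 1) - t i)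
  · obtain ⟨i₀, hi₀⟩ := Int.exists_forall_ge_eq_of_monotone hmono hbdd
    have h2 := two_le i₀
    exact .inl <| ht.isEventuallyPeriodic (p := (t (i₀ + 1) - t i₀).toNat) (by omega)
      fun i hi => by have := hi₀ i hi; omega
  · refine .inr fun ε hε => ?_
    obtain ⟨k, hk⟩ := exists_pow_lt_of_lt_one hε (by norm_num : (1 / 2 : ℝ) < 1)
    obtain ⟨_, ⟨i, rfl⟩, hi⟩ := not_bddAbove_iff.1 hbdd k
    have hi' : t (i + 1) - t i ≤ t (i + 1 + 1) - t (i + 1) := hmono (Nat.le_succ i)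
    simp only at hi
    refine ⟨t (i + 1) - 1, (dist_pibar_shiftIter_le (ht.eq (i + 1)) (fun m hm hm' => ?_)
      (fun m hm hm' => ?_)).trans_lt hk⟩
    · exact ht.eq_not i m (by omega) hm'
    · exact ht.eq_not (i + 1) m hm (by omega)

theorem isEventuallyPeriodic_or_approaches (hav : AvoidsDelta u) :
    IsEventuallyPeriodic u ∨
      ∀ ε : ℝ, 0 < ε → ∃ n : ℤ, dist (pibar (shiftIter n u)) (1 / 2, 1) < ε := by
  by_cases h1 : ∃ᶠ n in atTop, u n = true
  swap
  · exact .inl <| isEventuallyPeriodic_of_eventually_eq (w := false) (by simpa using h1)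
  by_cases h0 : ∃ᶠ n in atTop, u n = false
  swap
  · exact .inl <| isEventuallyPeriodic_of_eventually_eq (w := true) (by simpa using h0)
  by_cases h00 : ∃ᶠ n in atTop, u n = false ∧ u (n + 1) = false
  · exact .inl (hav.isEventuallyPeriodic_of_frequently_zero_zero h1 h00)
  · exact hav.isEventuallyPeriodic_or_approaches_of_eventually_one_after_zero h0 <|
      (not_frequently.1 h00).mono fun n h hn => by simpa [hn] using h

end AvoidsDelta

/-- The offset `1` makes `m ↦ 1 - m` exchange the halves `u (n + 1), u (n + 2), …` and
`u n, u (n - 1), …` read by `pibar (shiftIter n u)`. -/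
def reverseComplement (u : ℤ → Bool) : ℤ → Bool := fun m => !u (1 - m)

def reflect (p : ℝ × ℝ) : ℝ × ℝ := (1 - p.2, 1 - p.1)

lemma dist_reflect (p q : ℝ × ℝ) : dist (reflect p) (reflect q) = dist p q := by
  simp only [reflect, Prod.dist_eq, dist_sub_left, max_comm]

lemma reflect_zero_half : reflect (0, 1 / 2) = (1 / 2, 1) := by
  norm_num [reflect]

lemma reflect_mem_Delta_iff {p : ℝ × ℝ} : reflect p ∈ Delta ↔ p ∈ Delta := by
  simp only [reflect, Delta, Set.mem_ofPred_eq]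
  constructor <;> rintro ⟨h1, h2, h3, h4⟩ <;>
    exact ⟨by linarith, by linarith, by linarith, by linarith⟩

lemma pibar_shiftIter_reverseComplement (u : ℤ → Bool) (n : ℤ) :
    pibar (shiftIter n (reverseComplement u)) = reflect (pibar (shiftIter (-n) u)) := by
  simp only [pibar_shiftIter, reflect, reverseComplement, Prod.mk.injEq, ← binaryValue_not]
  constructor <;> congr! 4 <;> ring

lemma AvoidsDelta.reverseComplement {u : ℤ → Bool} (hav : AvoidsDelta u) :
    AvoidsDelta (reverseComplement u) := fun n h =>
  hav (-n) (reflect_mem_Delta_iff.1 (pibar_shiftIter_reverseComplement u n ▸ h))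

lemma IsEventuallyPeriodic.of_reverseComplement {u : ℤ → Bool}
    (h : IsEventuallyPeriodic (reverseComplement u)) :
    ∃ q : ℕ, 1 ≤ q ∧ ∃ M : ℤ, ∀ n : ℤ, n ≤ M → u (n - q) = u n := by
  obtain ⟨p, hp, N, hN⟩ := h
  refine ⟨p, hp, 1 - N, fun n hn => ?_⟩
  have h := hN (1 - n) (by omega)
  rw [reverseComplement, reverseComplement, show (1 : ℤ) - (1 - n + p) = n - p by ring,
    sub_sub_cancel] at h
  exact Bool.not_inj h

/-- If the coded orbit of `u` avoids `Δ`, then `u` is eventually periodic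
in both directions, or its coded orbit comes arbitrarily close to `(0,1/2)` or `(1/2,1)`. -/
theorem avoid_Delta_eventually_periodic_or_close (u : ℤ → Bool)
    (havoid : ∀ n : ℤ, pibar (shiftIter n u) ∉ Delta) :
    ((∃ p : ℕ, 1 ≤ p ∧ ∃ N : ℤ, ∀ n : ℤ, N ≤ n → u (n + p) = u n) ∧
      (∃ q : ℕ, 1 ≤ q ∧ ∃ M : ℤ, ∀ n : ℤ, n ≤ M → u (n - q) = u n)) ∨
    (∀ ε : ℝ, 0 < ε → ∃ n : ℤ,
      dist (pibar (shiftIter n u)) ((0 : ℝ), (1/2 : ℝ)) < ε ∨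
      dist (pibar (shiftIter n u)) ((1/2 : ℝ), (1 : ℝ)) < ε) := by
  have hav : AvoidsDelta u := havoid
  rcases hav.isEventuallyPeriodic_or_approaches with hright | hclose
  · rcases hav.reverseComplement.isEventuallyPeriodic_or_approaches with hleft | hclose
    · exact .inl ⟨hright, hleft.of_reverseComplement⟩
    · refine .inr fun ε hε => ?_
      obtain ⟨n, hn⟩ := hclose ε hε
      rw [pibar_shiftIter_reverseComplement, ← reflect_zero_half, dist_reflect] at hn
      exact ⟨-n, .inl hn⟩
  · exact .inr fun ε hε => (hclose ε hε).imp fun _ => .inr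

end
end
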